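/- arXiv:1402.4628 — 4 statements merged into one kernel-verified Lean document; each statement's English description precedes it below -/
import Mathlib

section
/- For every ε > 0 and T > 0 there exist constants c_0 ∈ (0,1) and p_0 > 0 such that for every real random variable ξ with mean 0, variance 1 and E|ξ|^{2+ε} ≤ T, there exists a real number c with c_0 ≤ c ≤ c_0^{−1} such that P( c < |ξ − ξ'| < 2c ) ≥ p_0, where ξ' is an independent copy of ξ. -/
open MeasureTheory ProbabilityTheory Real

/-! With `D = ξ - ξ'` we have `E D² = 2` and `E |D|^(2+ε) ≤ 2^(2+ε) T`. Split `E D²` at the levels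
`1/2` and `b = (3/2)^N`, where `b^ε ≥ 4 · 2^(2+ε) T`: the values `|D| ≤ 1/2` contribute at most
`1/4`, and since `D² ≤ |D|^(2+ε) / b^ε` on `|D| ≥ b`, so do the large values. Hence
`P(1/2 < |D| < b) ≥ 1 / (2 b²)`. The `N + 1` shells `(c, 2c)` with `c = (3/2)^k / 2` cover
`(1/2, b)` (the ratio `3/2 < 2` makes consecutive open shells overlap), so one of them has
probability at least `1 / (2 b² (N + 1))`. -/

lemma exists_le_rpow_pow {r : ℝ} (hr : 1 < r) {ε : ℝ} (hε : 0 < ε) (x : ℝ) :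
    ∃ N : ℕ, x ≤ (r ^ N) ^ ε := by
  obtain ⟨N, hN⟩ := pow_unbounded_of_one_lt (max x 0 ^ ε⁻¹) hr
  refine ⟨N, (le_max_left x 0).trans ?_⟩
  calc max x 0 = (max x 0 ^ ε⁻¹) ^ ε := (rpow_inv_rpow (le_max_right x 0) hε.ne').symm
    _ ≤ (r ^ N) ^ ε := rpow_le_rpow (by positivity) hN.le hε.le

lemma abs_sub_rpow_le {p : ℝ} (hp : 1 ≤ p) (x y : ℝ) :
    |x - y| ^ p ≤ 2 ^ (p - 1) * (|x| ^ p + |y| ^ p) := by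
  calc |x - y| ^ p ≤ (|x| + |y|) ^ p := rpow_le_rpow (abs_nonneg _) (abs_sub _ _) (by linarith)
    _ ≤ _ := by exact_mod_cast NNReal.rpow_add_le_mul_rpow_add_rpow ‖x‖₊ ‖y‖₊ hp

lemma Ioo_subset_biUnion_Ioo_mul_pow {a r : ℝ} (ha : 0 < a) (hr₀ : 0 < r) (hr₂ : r < 2)
    (N : ℕ) :
    Set.Ioo a (2 * (a * r ^ N)) ⊆
      ⋃ k ∈ Finset.range (N + 1), Set.Ioo (a * r ^ k) (2 * (a * r ^ k)) := by
  induction N with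
  | zero => simp
  | succ N ih =>
    intro x ⟨hax, hxr⟩
    rw [Finset.range_add_one, Finset.set_biUnion_insert]
    rcases lt_or_ge x (2 * (a * r ^ N)) with hx | hx
    · exact Or.inr (ih ⟨hax, hx⟩)
    · refine Or.inl ⟨lt_of_lt_of_le ?_ hx, hxr⟩
      rw [pow_succ]
      nlinarith [mul_pos (mul_pos ha (pow_pos hr₀ N)) (sub_pos.2 hr₂)]

section

variable {α : Type*} [MeasurableSpace α] {μ : Measure α}

lemma memLp_two_of_integrable_abs_rpow [IsFiniteMeasure μ] {f : α → ℝ} {p : ℝ}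
    (hf : AEStronglyMeasurable f μ) (hp : 2 ≤ p) (h : Integrable (fun x => |f x| ^ p) μ) :
    MemLp f 2 μ := by
  rw [← integrable_norm_rpow_iff hf two_ne_zero ENNReal.ofNat_ne_top]
  simpa using integrable_norm_rpow_of_le hf zero_le_two (by linarith) hp h

lemma sq_le_sq_add_indicator_add_rpow_div (x a : ℝ) {b ε : ℝ} (hb : 0 < b) (hε : 0 ≤ ε) :
    x ^ 2 ≤ a ^ 2 + (Set.Ioo a b).indicator (fun _ => b ^ 2) |x| + |x| ^ (2 + ε) / b ^ ε := by
  have hind : 0 ≤ (Set.Ioo a b).indicator (fun _ => b ^ 2) |x| :=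
    Set.indicator_nonneg (fun _ _ => sq_nonneg b) _
  have hrpow : 0 ≤ |x| ^ (2 + ε) / b ^ ε := by positivity
  rw [← sq_abs x]
  rcases le_or_gt |x| a with hxa | hax
  · nlinarith [abs_nonneg x]
  rcases lt_or_ge |x| b with hxb | hbx
  · rw [Set.indicator_of_mem (Set.mem_Ioo.2 ⟨hax, hxb⟩)]
    nlinarith [abs_nonneg x]
  · have hx : 0 < |x| := hb.trans_le hbx
    have : |x| ^ 2 * b ^ ε ≤ |x| ^ (2 + ε) := by
      rw [rpow_add hx, rpow_two]
      exact mul_le_mul_of_nonneg_left (rpow_le_rpow hb.le hbx hε) (sq_nonneg _)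
    have := (le_div_iff₀ (rpow_pos_of_pos hb ε)).2 this
    nlinarith [sq_nonneg a]

lemma integral_sq_le_of_integrable_abs_rpow [IsProbabilityMeasure μ] {X : α → ℝ}
    (hX : Measurable X) {ε : ℝ} (hε : 0 ≤ ε) (hint : Integrable (fun ω => |X ω| ^ (2 + ε)) μ)
    (a : ℝ) {b : ℝ} (hb : 0 < b) :
    ∫ ω, X ω ^ 2 ∂μ ≤ a ^ 2 + b ^ 2 * μ.real ((fun ω => |X ω|) ⁻¹' Set.Ioo a b)
      + (∫ ω, |X ω| ^ (2 + ε) ∂μ) / b ^ ε := by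
  have hmeas : MeasurableSet ((fun ω => |X ω|) ⁻¹' Set.Ioo a b) :=
    hX.abs measurableSet_Ioo
  have hind : Integrable
      (fun ω => ((fun ω => |X ω|) ⁻¹' Set.Ioo a b).indicator (fun _ => b ^ 2) ω) μ :=
    (integrable_const _).indicator hmeas
  have hsq := (memLp_two_of_integrable_abs_rpow hX.aestronglyMeasurable
    (by linarith) hint).integrable_sq
  calc ∫ ω, X ω ^ 2 ∂μ
      ≤ ∫ ω, (a ^ 2 + ((fun ω => |X ω|) ⁻¹' Set.Ioo a b).indicator (fun _ => b ^ 2) ω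
          + |X ω| ^ (2 + ε) / b ^ ε) ∂μ :=
        integral_mono hsq (((integrable_const _).add hind).add (hint.div_const _)) fun ω =>
          sq_le_sq_add_indicator_add_rpow_div (X ω) a hb hε
    _ = _ := by
        rw [integral_add ?_ (hint.div_const _), integral_add (integrable_const _) hind,
          integral_indicator_const _ hmeas, integral_const, integral_div]
        · simp [mul_comm]
        · exact (integrable_const _).add hind

lemma exists_le_measureReal_of_subset_biUnion {ι : Type*} [IsFiniteMeasure μ] {I : Finset ι}
    (hI : I.Nonempty) {s : Set α} {t : ι → Set α} (hst : s ⊆ ⋃ i ∈ I, t i) :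
    ∃ i ∈ I, μ.real s / I.card ≤ μ.real (t i) := by
  refine Finset.exists_le_of_sum_le hI ?_
  rw [Finset.sum_const, nsmul_eq_mul, mul_div_cancel₀ _ (by simp [hI.ne_empty])]
  exact (measureReal_mono hst (measure_ne_top _ _)).trans (measureReal_biUnion_finset_le _ _)

lemma exists_shell_measureReal_ge [IsProbabilityMeasure μ] {X : α → ℝ} (hX : Measurable X)
    {ε : ℝ} (hε : 0 ≤ ε) (hint : Integrable (fun ω => |X ω| ^ (2 + ε)) μ)
    (hsq : 1 ≤ ∫ ω, X ω ^ 2 ∂μ) {N : ℕ} (hN : 4 * ∫ ω, |X ω| ^ (2 + ε) ∂μ ≤ ((3 / 2) ^ N) ^ ε) :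
    ∃ c : ℝ, 1 / 2 ≤ c ∧ c ≤ (3 / 2) ^ N / 2 ∧
      1 / (2 * ((3 / 2) ^ N) ^ 2 * (N + 1)) ≤ μ.real {ω | c < |X ω| ∧ |X ω| < 2 * c} := by
  set b : ℝ := (3 / 2) ^ N
  have hb : 1 ≤ b := one_le_pow₀ (by norm_num)
  have htail : (∫ ω, |X ω| ^ (2 + ε) ∂μ) / b ^ ε ≤ 1 / 4 := by
    rw [div_le_iff₀ (rpow_pos_of_pos (by linarith) ε)]
    linarith
  have hmiddle : 1 / (2 * b ^ 2) ≤ μ.real ((fun ω => |X ω|) ⁻¹' Set.Ioo (1 / 2) b) := by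
    have := integral_sq_le_of_integrable_abs_rpow hX hε hint (1 / 2) (by linarith : 0 < b)
    rw [div_le_iff₀ (by positivity)]
    nlinarith
  have hcover : (fun ω => |X ω|) ⁻¹' Set.Ioo (1 / 2) b ⊆ ⋃ k ∈ Finset.range (N + 1),
      (fun ω => |X ω|) ⁻¹' Set.Ioo (1 / 2 * (3 / 2) ^ k) (2 * (1 / 2 * (3 / 2) ^ k)) := by
    rw [← Set.preimage_iUnion₂]
    refine Set.preimage_mono ?_
    convert Ioo_subset_biUnion_Ioo_mul_pow (a := 1 / 2) (r := 3 / 2) (by norm_num) (by norm_num)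
      (by norm_num) N using 2
    ring
  obtain ⟨k, hk, hshell⟩ :=
    exists_le_measureReal_of_subset_biUnion (μ := μ) Finset.nonempty_range_add_one hcover
  refine ⟨1 / 2 * (3 / 2) ^ k, ?_, ?_, ?_⟩
  · nlinarith [one_le_pow₀ (by norm_num : (1 : ℝ) ≤ 3 / 2) (n := k)]
  · have : ((3 : ℝ) / 2) ^ k ≤ b :=
      pow_le_pow_right₀ (by norm_num) (Nat.lt_succ_iff.1 (Finset.mem_range.1 hk))
    linarith
  · calc 1 / (2 * b ^ 2 * (N + 1)) = 1 / (2 * b ^ 2) / (Finset.range (N + 1)).card := by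
          rw [Finset.card_range, Nat.cast_add_one, div_div]
      _ ≤ _ := by gcongr
      _ ≤ _ := hshell

end

section

variable {ν : Measure ℝ} [IsProbabilityMeasure ν]

lemma integral_sub_sq_prod (h : MemLp (fun x => x) 2 ν) :
    ∫ z, (z.1 - z.2) ^ 2 ∂(ν.prod ν) = 2 * ∫ x, x ^ 2 ∂ν - 2 * (∫ x, x ∂ν) ^ 2 := by
  have h₂ := h.integrable_sq
  have h₁ := h.integrable one_le_two
  calc ∫ z, (z.1 - z.2) ^ 2 ∂(ν.prod ν)
      = ∫ z, (z.1 ^ 2 + z.2 ^ 2 - 2 * (z.1 * z.2)) ∂(ν.prod ν) := by congr 1; ext z; ring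
    _ = _ := by
      rw [integral_sub ?_ ((h₁.mul_prod h₁).const_mul 2),
        integral_add (h₂.comp_fst ν) (h₂.comp_snd ν), integral_const_mul,
        integral_fun_fst (fun x : ℝ => x ^ 2), integral_fun_snd (fun x : ℝ => x ^ 2),
        integral_prod_mul (fun x : ℝ => x) (fun x : ℝ => x)]
      · simp only [probReal_univ, one_smul]
        ring
      · exact (h₂.comp_fst ν).add (h₂.comp_snd ν)

lemma integrable_abs_sub_rpow_prod {p : ℝ} (hp : 1 ≤ p) (h : Integrable (fun x => |x| ^ p) ν) :
    Integrable (fun z : ℝ × ℝ => |z.1 - z.2| ^ p) (ν.prod ν) := by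
  refine (((h.comp_fst ν).add (h.comp_snd ν)).const_mul (2 ^ (p - 1))).mono'
    ((measurable_fst.sub measurable_snd).abs.pow_const p).aestronglyMeasurable
    (Filter.Eventually.of_forall fun z => ?_)
  rw [norm_of_nonneg (by positivity)]
  exact abs_sub_rpow_le hp z.1 z.2

lemma integral_abs_sub_rpow_prod_le {p : ℝ} (hp : 1 ≤ p) (h : Integrable (fun x => |x| ^ p) ν) :
    ∫ z, |z.1 - z.2| ^ p ∂(ν.prod ν) ≤ 2 ^ p * ∫ x, |x| ^ p ∂ν := by
  calc ∫ z, |z.1 - z.2| ^ p ∂(ν.prod ν)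
      ≤ ∫ z : ℝ × ℝ, 2 ^ (p - 1) * (|z.1| ^ p + |z.2| ^ p) ∂(ν.prod ν) :=
        integral_mono (integrable_abs_sub_rpow_prod hp h)
          (((h.comp_fst ν).add (h.comp_snd ν)).const_mul _) fun z => abs_sub_rpow_le hp z.1 z.2
    _ = 2 ^ p * ∫ x, |x| ^ p ∂ν := by
      rw [integral_const_mul, integral_add (h.comp_fst ν) (h.comp_snd ν),
        integral_fun_fst (fun x : ℝ => |x| ^ p), integral_fun_snd (fun x : ℝ => |x| ^ p),
        rpow_sub_one two_ne_zero]
      simp only [probReal_univ, one_smul]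
      ring

end

theorem anticoncentration_of_difference_general
    (ε : ℝ) (hε : 0 < ε) (T : ℝ) :
    ∃ c₀ p₀ : ℝ, 0 < c₀ ∧ c₀ < 1 ∧ 0 < p₀ ∧
      ∀ (ν : Measure ℝ), IsProbabilityMeasure ν →
        (∫ x, x ∂ν) = 0 → (∫ x, x ^ 2 ∂ν) = 1 →
        Integrable (fun x => |x| ^ (2 + ε)) ν → (∫ x, |x| ^ (2 + ε) ∂ν) ≤ T →
        ∃ c : ℝ, c₀ ≤ c ∧ c ≤ c₀⁻¹ ∧
          p₀ ≤ ((ν.prod ν) {p : ℝ × ℝ | c < |p.1 - p.2| ∧ |p.1 - p.2| < 2 * c}).toReal := by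
  obtain ⟨N, hN⟩ :=
    exists_le_rpow_pow (by norm_num : (1 : ℝ) < 3 / 2) hε (4 * (2 ^ (2 + ε) * T))
  set b : ℝ := (3 / 2) ^ N
  have hb : 1 ≤ b := one_le_pow₀ (by norm_num)
  refine ⟨(2 * b)⁻¹, 1 / (2 * b ^ 2 * (N + 1)), by positivity,
    inv_lt_one_of_one_lt₀ (by linarith), by positivity, fun ν _ hmean hvar hint hmom => ?_⟩
  have hL2 := memLp_two_of_integrable_abs_rpow aestronglyMeasurable_id (by linarith) hint
  have hmomD := integral_abs_sub_rpow_prod_le (by linarith) hint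
  obtain ⟨c, hc₁, hc₂, hshell⟩ :=
    exists_shell_measureReal_ge (μ := ν.prod ν) (X := fun z => z.1 - z.2)
      (measurable_fst.sub measurable_snd) hε.le (integrable_abs_sub_rpow_prod (by linarith) hint)
      (by rw [integral_sub_sq_prod hL2, hmean, hvar]; norm_num)
      (hN.trans' (by gcongr; exact hmomD.trans (by gcongr)))
  refine ⟨c, ?_, ?_, hshell⟩
  · calc (2 * b)⁻¹ ≤ 1 / 2 := by rw [one_div]; gcongr; linarith
      _ ≤ c := hc₁
  · rw [inv_inv]; linarith

/-- There exist `c₀ ∈ (0,1)` and `p₀ > 0`, depending only on `ε` and `T`, such that any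
`ξ` with mean 0, variance 1 and `(2+ε)`-moment at most `T` admits `c ∈ [c₀, c₀⁻¹]` with
`P(c < |ξ - ξ'| < 2c) ≥ p₀`, where `ξ'` is an independent copy of `ξ`. -/
theorem anticoncentration_of_difference
    (ε : ℝ) (hε : 0 < ε) (T : ℝ) (hT : 0 < T) :
    ∃ c₀ p₀ : ℝ, 0 < c₀ ∧ c₀ < 1 ∧ 0 < p₀ ∧
      ∀ (ν : Measure ℝ), IsProbabilityMeasure ν →
        (∫ x, x ∂ν) = 0 → (∫ x, x ^ 2 ∂ν) = 1 →
        Integrable (fun x => |x| ^ (2 + ε)) ν → (∫ x, |x| ^ (2 + ε) ∂ν) ≤ T →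
        ∃ c : ℝ, c₀ ≤ c ∧ c ≤ c₀⁻¹ ∧
          p₀ ≤ ((ν.prod ν) {p : ℝ × ℝ | c < |p.1 - p.2| ∧ |p.1 - p.2| < 2 * c}).toReal :=
  anticoncentration_of_difference_general ε hε T
end

section
/- Let y ∈ (0,1) and let l, k be positive integers with y^l < 1/2. Then the set { ∑_{i=1}^{k} ε_i y^{i(l+2)} : ε_i ∈ {−1, 1} } is 2 y^{k(l+2)}-separated; that is, for any two distinct sign sequences (ε_1, …, ε_k), (ε'_1, …, ε'_k) ∈ {−1,1}^k, one has | ∑_{i=1}^{k} ε_i y^{i(l+2)} − ∑_{i=1}^{k} ε'_i y^{i(l+2)} | ≥ 2 y^{k(l+2)}. -/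
/-!
Write `q = y^(l+2) ≤ 1/2` and let `j` be the first index where the sign sequences differ. The
difference of the two sums is `∑_{i=j}^k c_i q^i` with `|c_j| = 2` and `|c_i| ≤ 2`. Since
`q ≤ 1/2`, each power of `q` dominates all later ones together with `q^k`, so the leading term
`2 q^j` beats the tail by at least `2 q^k`.
-/

open Finset

theorem pow_add_sum_Ioc_pow_le {q : ℝ} (hq0 : 0 ≤ q) (hq : q ≤ 1 / 2) {j k : ℕ} (hjk : j ≤ k) :
    q ^ k + ∑ i ∈ Ioc j k, q ^ i ≤ q ^ j := by
  induction k, hjk using Nat.le_induction with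
  | base => simp
  | succ k hjk ih =>
    have hstep : 2 * q ^ (k + 1) ≤ q ^ k := by
      rw [pow_succ]
      nlinarith [pow_nonneg hq0 k]
    rw [sum_Ioc_succ_top hjk]
    linarith

theorem le_abs_sum_Icc_mul_pow {q C : ℝ} (hq0 : 0 ≤ q) (hq : q ≤ 1 / 2) {c : ℕ → ℝ} {j k : ℕ}
    (hjk : j ≤ k) (hj : |c j| = C) (hc : ∀ i ∈ Ioc j k, |c i| ≤ C) :
    C * q ^ k ≤ |∑ i ∈ Icc j k, c i * q ^ i| := by
  have hC : 0 ≤ C := hj ▸ abs_nonneg _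
  have hhead : |c j * q ^ j| = C * q ^ j := by
    rw [abs_mul, hj, abs_of_nonneg (pow_nonneg hq0 j)]
  have htail : |∑ i ∈ Ioc j k, c i * q ^ i| ≤ C * ∑ i ∈ Ioc j k, q ^ i := by
    rw [mul_sum]
    refine (abs_sum_le_sum_abs _ _).trans (sum_le_sum fun i hi => ?_)
    rw [abs_mul, abs_of_nonneg (pow_nonneg hq0 i)]
    exact mul_le_mul_of_nonneg_right (hc i hi) (pow_nonneg hq0 i)
  have hgeom := mul_le_mul_of_nonneg_left (pow_add_sum_Ioc_pow_le hq0 hq hjk) hC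
  rw [← Ioc_insert_left hjk, sum_insert left_notMem_Ioc]
  calc C * q ^ k ≤ |c j * q ^ j| - |∑ i ∈ Ioc j k, c i * q ^ i| := by linarith
    _ ≤ _ := abs_sub_abs_le_abs_add _ _

theorem abs_sub_le_two_of_sign {a b : ℝ} (ha : a = -1 ∨ a = 1) (hb : b = -1 ∨ b = 1) :
    |a - b| ≤ 2 := by
  rcases ha with rfl | rfl <;> rcases hb with rfl | rfl <;> norm_num

theorem abs_sub_eq_two_of_sign_ne {a b : ℝ} (ha : a = -1 ∨ a = 1) (hb : b = -1 ∨ b = 1)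
    (hab : a ≠ b) : |a - b| = 2 := by
  rcases ha with rfl | rfl <;> rcases hb with rfl | rfl <;> norm_num at *

theorem signed_lacunary_sums_separated_general
    (y : ℝ) (hy0 : 0 < y) (hy1 : y < 1)
    (l k : ℕ) (hyl : y ^ l < 1 / 2)
    (e e' : ℕ → ℝ)
    (he : ∀ i ∈ Finset.Icc 1 k, e i = -1 ∨ e i = 1)
    (he' : ∀ i ∈ Finset.Icc 1 k, e' i = -1 ∨ e' i = 1)
    (hne : ∃ i ∈ Finset.Icc 1 k, e i ≠ e' i) :
    2 * y ^ (k * (l + 2)) ≤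
      |(∑ i ∈ Finset.Icc 1 k, e i * y ^ (i * (l + 2)))
        - ∑ i ∈ Finset.Icc 1 k, e' i * y ^ (i * (l + 2))| := by
  classical
  have hq : y ^ (l + 2) ≤ 1 / 2 :=
    (pow_le_pow_of_le_one hy0.le hy1.le (by omega)).trans hyl.le
  let j := Nat.find hne
  obtain ⟨hj, hej⟩ : j ∈ Icc 1 k ∧ e j ≠ e' j := Nat.find_spec hne
  have hagree : ∀ i ∈ Icc 1 k, i < j → e i = e' i := fun i hi hij =>
    not_not.mp fun h => Nat.find_min hne hij ⟨hi, h⟩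
  have hsub : Icc j k ⊆ Icc 1 k := Icc_subset_Icc (mem_Icc.mp hj).1 le_rfl
  have hsum : ∑ i ∈ Icc 1 k, (e i - e' i) * (y ^ (l + 2)) ^ i
      = ∑ i ∈ Icc j k, (e i - e' i) * (y ^ (l + 2)) ^ i := by
    refine (sum_subset hsub fun i hi hij => ?_).symm
    rw [hagree i hi (by rw [mem_Icc] at hi hij; omega), sub_self, zero_mul]
  simp only [pow_mul', ← sum_sub_distrib, ← sub_mul, hsum]
  refine le_abs_sum_Icc_mul_pow (by positivity) hq (mem_Icc.mp hj).2
    (abs_sub_eq_two_of_sign_ne (he j hj) (he' j hj) hej) fun i hi => ?_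
  have hi' := hsub (Ioc_subset_Icc_self hi)
  exact abs_sub_le_two_of_sign (he i hi') (he' i hi')

/-- Separation of signed sums of the lacunary sequence `y^{i(l+2)}`: if `0 < y < 1` and
`y^l < 1/2`, then any two sums `∑_{i=1}^k ε_i y^{i(l+2)}` with distinct sign sequences
`ε_i ∈ {-1, 1}` differ by at least `2 y^{k(l+2)}`. -/
theorem signed_lacunary_sums_separated
    (y : ℝ) (hy0 : 0 < y) (hy1 : y < 1)
    (l k : ℕ) (hl : 0 < l) (hk : 0 < k) (hyl : y ^ l < 1 / 2)
    (e e' : ℕ → ℝ)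
    (he : ∀ i ∈ Finset.Icc 1 k, e i = -1 ∨ e i = 1)
    (he' : ∀ i ∈ Finset.Icc 1 k, e' i = -1 ∨ e' i = 1)
    (hne : ∃ i ∈ Finset.Icc 1 k, e i ≠ e' i) :
    2 * y ^ (k * (l + 2)) ≤
      |(∑ i ∈ Finset.Icc 1 k, e i * y ^ (i * (l + 2)))
        - ∑ i ∈ Finset.Icc 1 k, e' i * y ^ (i * (l + 2))| :=
  signed_lacunary_sums_separated_general y hy0 hy1 l k hyl e e' he he' hne
end

section
/- Let F : ℝ → ℝ be twice continuously differentiable and G : ℝ → ℝ be continuous. Let x_0 ∈ ℝ, ε_1 > 0, M > 0, and set I := [x_0 − ε_1 M^{−1}, x_0 + ε_1 M^{−1}]. Assume: (i) F(x_0) = 0 and |F'(x_0)| ≥ ε_1; (ii) |F''(x)| ≤ M for all x ∈ I; (iii) sup_{x ∈ I} |F(x) − G(x)| ≤ (1/4) ε_1² M^{−1}. Then G has a root in I, i.e., there exists x ∈ I with G(x) = 0. -/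
/-!
By Taylor's theorem `F` stays within `M t² / 2` of its tangent line `t ↦ F'(x₀) t` at `x₀`, so at
the endpoints `x₀ ± δ` of `I`, where `δ = ε₁ / M`, the function `G` differs from `± F'(x₀) δ` by at
most `ε₁² / (4M) + ε₁² / (2M) = (3/4) ε₁ δ < |F'(x₀)| δ`. Hence `G` has opposite signs at the two
endpoints and vanishes in between by the intermediate value theorem.
-/

open Set

theorem abs_sub_taylor_one_le {f : ℝ → ℝ} (hf : ContDiff ℝ 2 f) {x₀ x M : ℝ}
    (hM : ∀ t ∈ uIcc x₀ x, |deriv (deriv f) t| ≤ M) :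
    |f x - f x₀ - deriv f x₀ * (x - x₀)| ≤ M / 2 * (x - x₀) ^ 2 := by
  rcases eq_or_ne x₀ x with rfl | hx
  · simp
  obtain ⟨y, hy, hrem⟩ := taylor_mean_remainder_lagrange_iteratedDeriv (n := 1) hx hf.contDiffOn
  rw [iteratedDeriv_succ, iteratedDeriv_one, Nat.factorial_two, Nat.cast_two] at hrem
  have htaylor : taylorWithinEval f 1 (uIcc x₀ x) x₀ x = f x₀ + deriv f x₀ * (x - x₀) := by
    have hderiv : derivWithin f (uIcc x₀ x) x₀ = deriv f x₀ :=
      (hf.differentiable two_ne_zero x₀).derivWithin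
        (uniqueDiffOn_uIcc hx x₀ left_mem_uIcc)
    rw [taylorWithinEval_succ, taylor_within_zero_eval, iteratedDerivWithin_one, hderiv]
    norm_num [mul_comm]
  rw [sub_sub, ← htaylor, hrem]
  calc |deriv (deriv f) y * (x - x₀) ^ 2 / 2|
      = |deriv (deriv f) y| / 2 * (x - x₀) ^ 2 := by
        rw [abs_div, abs_mul, abs_sq, abs_two]; ring
    _ ≤ M / 2 * (x - x₀) ^ 2 := by
        gcongr
        exact hM y (uIoo_subset_uIcc_self hy)

theorem abs_sub_taylor_one_le_of_abs_sub_le {F G : ℝ → ℝ} (hF : ContDiff ℝ 2 F) {x₀ x M η : ℝ}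
    (hF'' : ∀ t ∈ uIcc x₀ x, |deriv (deriv F) t| ≤ M) (hFG : |F x - G x| ≤ η) :
    |G x - F x₀ - deriv F x₀ * (x - x₀)| ≤ η + M / 2 * (x - x₀) ^ 2 := by
  have hTaylor := abs_sub_taylor_one_le hF hF''
  rw [abs_le] at hFG hTaylor ⊢
  constructor <;> linarith

theorem exists_mem_Icc_eq_zero_of_abs_sub_le {G : ℝ → ℝ} {a b c r : ℝ} (hab : a ≤ b)
    (hG : ContinuousOn G (Icc a b)) (hb : |G b - c| ≤ r) (ha : |G a + c| ≤ r) (hr : r ≤ |c|) :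
    ∃ x ∈ Icc a b, G x = 0 := by
  have hsign : (0 : ℝ) ∈ uIcc (G a) (G b) := by
    rw [abs_le] at ha hb
    rcases le_total 0 c with hc | hc
    · rw [abs_of_nonneg hc] at hr
      exact mem_uIcc.mpr (Or.inl ⟨by linarith, by linarith⟩)
    · rw [abs_of_nonpos hc] at hr
      exact mem_uIcc.mpr (Or.inr ⟨by linarith, by linarith⟩)
  rw [← uIcc_of_le hab] at hG ⊢
  exact intermediate_value_uIcc hG hsign

/-- If `F` is `C²` with `F(x₀) = 0`, `|F'(x₀)| ≥ ε₁`, `|F''| ≤ M` on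
`I = [x₀ - ε₁/M, x₀ + ε₁/M]`, and `G` is continuous with `|F - G| ≤ ε₁²/(4M)` on `I`,
then `G` has a root in `I`. -/
theorem approximating_function_has_root
    (F G : ℝ → ℝ) (hF : ContDiff ℝ 2 F) (hG : Continuous G)
    (x₀ ε₁ M : ℝ) (hε₁ : 0 < ε₁) (hM : 0 < M)
    (hFx₀ : F x₀ = 0) (hF' : ε₁ ≤ |deriv F x₀|)
    (hF'' : ∀ x ∈ Set.Icc (x₀ - ε₁ * M⁻¹) (x₀ + ε₁ * M⁻¹), |deriv (deriv F) x| ≤ M)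
    (hFG : ∀ x ∈ Set.Icc (x₀ - ε₁ * M⁻¹) (x₀ + ε₁ * M⁻¹),
      |F x - G x| ≤ (1 / 4) * ε₁ ^ 2 * M⁻¹) :
    ∃ x ∈ Set.Icc (x₀ - ε₁ * M⁻¹) (x₀ + ε₁ * M⁻¹), G x = 0 := by
  set δ := ε₁ * M⁻¹ with hδ_def
  have hδ : 0 < δ := by positivity
  have hx₀ : x₀ ∈ Icc (x₀ - δ) (x₀ + δ) := ⟨by linarith, by linarith⟩
  have hb : x₀ + δ ∈ Icc (x₀ - δ) (x₀ + δ) := right_mem_Icc.mpr (by linarith)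
  have ha : x₀ - δ ∈ Icc (x₀ - δ) (x₀ + δ) := left_mem_Icc.mpr (by linarith)
  have hbudget : 1 / 4 * ε₁ ^ 2 * M⁻¹ + M / 2 * δ ^ 2 = 3 / 4 * (ε₁ * δ) := by
    rw [hδ_def]; field_simp; ring
  have hright := abs_sub_taylor_one_le_of_abs_sub_le hF
    (fun t ht => hF'' t (uIcc_subset_Icc hx₀ hb ht)) (hFG _ hb)
  have hleft := abs_sub_taylor_one_le_of_abs_sub_le hF
    (fun t ht => hF'' t (uIcc_subset_Icc hx₀ ha ht)) (hFG _ ha)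
  rw [hFx₀, sub_zero, add_sub_cancel_left, hbudget] at hright
  rw [hFx₀, sub_zero, sub_sub_cancel_left, mul_neg, sub_neg_eq_add, neg_sq, hbudget] at hleft
  refine exists_mem_Icc_eq_zero_of_abs_sub_le (by linarith) hG.continuousOn hright hleft ?_
  calc 3 / 4 * (ε₁ * δ) ≤ ε₁ * δ := by linarith [mul_pos hε₁ hδ]
    _ ≤ |deriv F x₀ * δ| := by
      rw [abs_mul, abs_of_pos hδ]
      exact mul_le_mul_of_nonneg_right hF' hδ.le
end

section
/- Let ξ be a real random variable with E|ξ| ≤ 1, let c > 0 be such that q := P(|ξ| ≤ c) satisfies q ≤ q_1 < 1, and let R ∈ (0,1). Let ξ_0, …, ξ_n be iid copies of ξ, and for k = 0, …, n let B_k be the event { |ξ_0| ≤ c, …, |ξ_{k−1}| ≤ c, |ξ_k| > c }, and set c_{jk} := binom(j,k) R^{j−k} for j ≥ k. Then there exists a constant C'' depending only on q_1, c and R (not on n) such that ∑_{k=0}^{n} ∫_{B_k} log( ∑_{j=k}^{n} c_{jk} |ξ_j| ) dP ≤ C''. -/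
open MeasureTheory ProbabilityTheory Real

/-!
Let `S_k` be the weighted sum inside the `k`-th logarithm. Its coefficients sum to at most
`K_k = ∑_{j ≥ k} C(j,k) R^{j-k} = (1 - R)^{-(k+1)}`, and `log S_k ≤ log K_k + S_k / K_k`.
On `B_k ⊆ A_k := {|ξ_0| ≤ c, …, |ξ_{k-1}| ≤ c}`, independence gives
`∫_{A_k} |ξ_j| = P(A_k) E|ξ_j| ≤ q^k` for `j ≥ k`, so the `k`-th term is at most
`q^k ((k+1) log (1 - R)⁻¹ + 1)`, whose sum over `k` is bounded in terms of `q₁` and `R` alone.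
-/

lemma sum_Icc_choose_mul_pow_le {r : ℝ} (hr0 : 0 ≤ r) (hr1 : r < 1) (k n : ℕ) :
    ∑ j ∈ Finset.Icc k n, (j.choose k : ℝ) * r ^ (j - k) ≤ (1 - r)⁻¹ ^ (k + 1) := by
  have hsum := hasSum_choose_mul_geometric_of_norm_lt_one k (r := r)
    (by rwa [norm_of_nonneg hr0])
  rw [one_div, ← inv_pow] at hsum
  calc ∑ j ∈ Finset.Icc k n, (j.choose k : ℝ) * r ^ (j - k)
      = ∑ i ∈ Finset.range (n + 1 - k), ((i + k).choose k : ℝ) * r ^ i := by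
        rw [← Finset.Ico_add_one_right_eq_Icc, Finset.sum_Ico_eq_sum_range]
        exact Finset.sum_congr rfl fun i _ => by rw [add_comm k i, Nat.add_sub_cancel]
    _ ≤ (1 - r)⁻¹ ^ (k + 1) := sum_le_hasSum _ (fun i _ => by positivity) hsum

lemma hasSum_pow_mul_succ_mul_add {q : ℝ} (hq0 : 0 ≤ q) (hq1 : q < 1) (a b : ℝ) :
    HasSum (fun k : ℕ => q ^ k * ((k + 1) * a + b)) ((1 - q)⁻¹ ^ 2 * a + (1 - q)⁻¹ * b) := by
  have h1 := hasSum_choose_mul_geometric_of_norm_lt_one 1 (r := q)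
    (by rwa [norm_of_nonneg hq0])
  rw [one_div, ← inv_pow] at h1
  have h := (h1.mul_right a).add ((hasSum_geometric_of_lt_one hq0 hq1).mul_right b)
  simp only [Nat.choose_one_right, Nat.cast_add, Nat.cast_one, one_add_one_eq_two] at h
  exact h.congr_fun fun k => by ring

lemma log_le_log_add_div {x K : ℝ} (hx : 0 ≤ x) (hK : 1 ≤ K) : log x ≤ log K + x / K := by
  rcases hx.eq_or_lt with rfl | hx
  · -- `log 0 = 0`, which is why `1 ≤ K` is assumed rather than `0 < K`
    simpa using log_nonneg hK
  · have := log_le_sub_one_of_pos (div_pos hx (by linarith))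
    rw [log_div hx.ne' (by linarith)] at this
    linarith

lemma setIntegral_log_le_of_subset {Ω : Type*} [MeasurableSpace Ω] {μ : Measure Ω}
    [IsFiniteMeasure μ] {s t : Set Ω} (hst : s ⊆ t) {f : Ω → ℝ} (hf0 : 0 ≤ f)
    (hf : IntegrableOn f t μ) {K : ℝ} (hK : 1 ≤ K) :
    ∫ ω in s, log (f ω) ∂μ ≤ μ.real t * log K + (∫ ω in t, f ω ∂μ) / K := by
  have hg : IntegrableOn (fun ω => log K + f ω / K) t μ :=
    (integrableOn_const (C := log K)).add (hf.div_const K)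
  have hg0 : ∀ ω, 0 ≤ log K + f ω / K := fun ω =>
    add_nonneg (log_nonneg hK) (div_nonneg (hf0 ω) (by linarith))
  calc ∫ ω in s, log (f ω) ∂μ ≤ ∫ ω in s, (log K + f ω / K) ∂μ := by
        by_cases hlog : IntegrableOn (fun ω => log (f ω)) s μ
        · exact setIntegral_mono hlog (hg.mono_set hst) fun ω => log_le_log_add_div (hf0 ω) hK
        · rw [integral_undef hlog]
          exact integral_nonneg hg0
    _ ≤ ∫ ω in t, (log K + f ω / K) ∂μ :=
        setIntegral_mono_set hg (ae_of_all _ hg0) hst.eventuallyLE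
    _ = μ.real t * log K + (∫ ω in t, f ω ∂μ) / K := by
        rw [integral_add (integrable_const (log K)) (hf.div_const K), setIntegral_const,
          integral_div, smul_eq_mul]

namespace ProbabilityTheory

variable {Ω ι β : Type*} [MeasurableSpace Ω] [MeasurableSpace β] {μ : Measure Ω}
  {ξ : ι → Ω → β}

lemma iIndepFun.setIntegral_comp_eq_measureReal_mul (hξ : iIndepFun ξ μ)
    (hmeas : ∀ i, Measurable (ξ i)) {S : Finset ι} {j : ι} (hj : j ∉ S) {s : Set β}
    (hs : MeasurableSet s) {f : β → ℝ} (hf : Measurable f) :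
    ∫ ω in {ω | ∀ i ∈ S, ξ i ω ∈ s}, f (ξ j ω) ∂μ
      = μ.real {ω | ∀ i ∈ S, ξ i ω ∈ s} * ∫ ω, f (ξ j ω) ∂μ := by
  have hindep : IndepFun (fun ω (i : S) => ξ i ω) (ξ j) μ :=
    (hξ.indepFun_finset S {j} (Finset.disjoint_singleton_right.2 hj) hmeas).comp
      measurable_id (measurable_pi_apply (⟨j, Finset.mem_singleton_self j⟩ : ({j} : Finset ι)))
  have hle := (measurable_pi_lambda (fun ω (i : S) => ξ i ω) fun i => hmeas i).comap_le
  refine Indep.setIntegral_eq_mul hle ((IndepFun_iff_Indep _ _ _).1 hindep) (hmeas j).aemeasurable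
    ⟨Set.univ.pi fun _ => s, MeasurableSet.univ_pi fun _ => hs, ?_⟩ hf.aestronglyMeasurable
  ext ω
  simp

lemma iIndepFun.measureReal_forall_mem_eq_pow (hξ : iIndepFun ξ μ)
    (hmeas : ∀ i, Measurable (ξ i)) {ν : Measure β} (hident : ∀ i, μ.map (ξ i) = ν)
    (S : Finset ι) {s : Set β} (hs : MeasurableSet s) :
    μ.real {ω | ∀ i ∈ S, ξ i ω ∈ s} = ν.real s ^ S.card := by
  have h := hξ.meas_biInter (S := S) (s := fun i => ξ i ⁻¹' s) fun i _ => ⟨s, hs, rfl⟩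
  have hpre : ∀ i, μ (ξ i ⁻¹' s) = ν s := fun i => by
    rw [← hident i, Measure.map_apply (hmeas i) hs]
  simp only [hpre, Finset.prod_const] at h
  rw [Measure.real, Measure.real, ← ENNReal.toReal_pow, ← h]
  congr 2
  ext ω
  simp

end ProbabilityTheory

lemma setIntegral_log_sum_choose_mul_abs_le {Ω : Type*} [MeasurableSpace Ω] {μ : Measure Ω}
    {ξ : ℕ → Ω → ℝ} {ν : Measure ℝ} (hξ : iIndepFun ξ μ)
    (hmeas : ∀ i, Measurable (ξ i)) (hident : ∀ i, μ.map (ξ i) = ν)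
    (hint : Integrable (fun x => |x|) ν) (hmean : ∫ x, |x| ∂ν ≤ 1) {R : ℝ} (hR0 : 0 ≤ R)
    (hR1 : R < 1) (c : ℝ) (k n : ℕ) :
    ∫ ω in {ω | (∀ j < k, |ξ j ω| ≤ c) ∧ c < |ξ k ω|},
        log (∑ j ∈ Finset.Icc k n, (j.choose k : ℝ) * R ^ (j - k) * |ξ j ω|) ∂μ
      ≤ ν.real {x | |x| ≤ c} ^ k * ((k + 1) * log (1 - R)⁻¹ + 1) := by
  have := hξ.isProbabilityMeasure
  set A := {ω | ∀ i ∈ Finset.range k, ξ i ω ∈ {x : ℝ | |x| ≤ c}}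
  set K := (1 - R)⁻¹ ^ (k + 1)
  have hs : MeasurableSet {x : ℝ | |x| ≤ c} := measurableSet_le measurable_abs measurable_const
  have hK : 1 ≤ K := one_le_pow₀ ((one_le_inv₀ (by linarith)).2 (by linarith))
  have hintξ : ∀ j, Integrable (fun ω => |ξ j ω|) μ := fun j => by
    have h := hint
    rw [← hident j] at h
    exact (integrable_map_measure h.aestronglyMeasurable (hmeas j).aemeasurable).1 h
  have hmeanξ : ∀ j, ∫ ω, |ξ j ω| ∂μ ≤ 1 := fun j => by
    rwa [← integral_map (hmeas j).aemeasurable continuous_abs.aestronglyMeasurable, hident j]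
  have hSA : ∫ ω in A, ∑ j ∈ Finset.Icc k n, (j.choose k : ℝ) * R ^ (j - k) * |ξ j ω| ∂μ
      ≤ μ.real A * K := calc
    _ = ∑ j ∈ Finset.Icc k n, (j.choose k : ℝ) * R ^ (j - k) * ∫ ω in A, |ξ j ω| ∂μ := by
        rw [integral_finsetSum _ fun j _ => ((hintξ j).const_mul _).integrableOn]
        exact Finset.sum_congr rfl fun j _ => integral_const_mul _ _
    _ = ∑ j ∈ Finset.Icc k n, (j.choose k : ℝ) * R ^ (j - k) * (μ.real A * ∫ ω, |ξ j ω| ∂μ) := by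
        refine Finset.sum_congr rfl fun j hj => ?_
        rw [hξ.setIntegral_comp_eq_measureReal_mul hmeas (f := fun x => |x|) _ hs measurable_abs]
        simpa using (Finset.mem_Icc.1 hj).1
    _ ≤ ∑ j ∈ Finset.Icc k n, (j.choose k : ℝ) * R ^ (j - k) * (μ.real A * 1) := by
        gcongr with j
        exact hmeanξ j
    _ = μ.real A * ∑ j ∈ Finset.Icc k n, (j.choose k : ℝ) * R ^ (j - k) := by
        rw [Finset.mul_sum]
        exact Finset.sum_congr rfl fun j _ => by ring
    _ ≤ μ.real A * K := by gcongr; exact sum_Icc_choose_mul_pow_le hR0 hR1 k n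
  calc _ ≤ μ.real A * log K + (∫ ω in A, ∑ j ∈ Finset.Icc k n,
          (j.choose k : ℝ) * R ^ (j - k) * |ξ j ω| ∂μ) / K :=
        setIntegral_log_le_of_subset (fun ω hω i hi => hω.1 i (Finset.mem_range.1 hi))
          (fun ω => Finset.sum_nonneg fun j _ => by positivity)
          (integrable_finsetSum _ fun j _ => (hintξ j).const_mul _).integrableOn hK
    _ ≤ μ.real A * log K + μ.real A := by
        gcongr
        rwa [div_le_iff₀ (by linarith)]
    _ = ν.real {x | |x| ≤ c} ^ k * ((k + 1) * log (1 - R)⁻¹ + 1) := by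
        rw [hξ.measureReal_forall_mem_eq_pow hmeas hident _ hs, Finset.card_range, log_pow]
        push_cast
        ring

theorem sum_log_integral_bounded_general
    (q₁ c R : ℝ) (hR0 : 0 < R) (hR1 : R < 1) (hq₁ : q₁ < 1) :
    ∃ C'' : ℝ, ∀ (n : ℕ) (ν : Measure ℝ), IsProbabilityMeasure ν →
      Integrable (fun x => |x|) ν → (∫ x, |x| ∂ν) ≤ 1 →
      (ν {x : ℝ | |x| ≤ c}).toReal ≤ q₁ →
      ∀ (Ω : Type) (_ : MeasurableSpace Ω) (μ : Measure Ω), IsProbabilityMeasure μ →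
      ∀ ξ : ℕ → Ω → ℝ, (∀ i, Measurable (ξ i)) →
        iIndepFun ξ μ →
        (∀ i, μ.map (ξ i) = ν) →
        (∑ k ∈ Finset.range (n + 1),
            ∫ ω in {ω | (∀ j < k, |ξ j ω| ≤ c) ∧ c < |ξ k ω|},
              Real.log (∑ j ∈ Finset.Icc k n,
                (j.choose k : ℝ) * R ^ (j - k) * |ξ j ω|) ∂μ)
          ≤ C'' := by
  refine ⟨(1 - q₁)⁻¹ ^ 2 * log (1 - R)⁻¹ + (1 - q₁)⁻¹ * 1, ?_⟩
  intro n ν _ hint hmean hq Ω _ μ _ ξ hmeas hξ hident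
  have hp : 0 ≤ ν.real {x : ℝ | |x| ≤ c} := measureReal_nonneg
  have hq₀ : 0 ≤ q₁ := hp.trans hq
  have hL : 0 ≤ log (1 - R)⁻¹ := log_nonneg ((one_le_inv₀ (by linarith)).2 (by linarith))
  calc _ ≤ ∑ k ∈ Finset.range (n + 1),
          ν.real {x : ℝ | |x| ≤ c} ^ k * ((k + 1) * log (1 - R)⁻¹ + 1) :=
        Finset.sum_le_sum fun k _ =>
          setIntegral_log_sum_choose_mul_abs_le hξ hmeas hident hint hmean hR0.le hR1 c k n
    _ ≤ ∑ k ∈ Finset.range (n + 1), q₁ ^ k * ((k + 1) * log (1 - R)⁻¹ + 1) := by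
        gcongr
        exact hq
    _ ≤ _ := sum_le_hasSum _ (fun k _ => mul_nonneg (pow_nonneg hq₀ k) (by positivity))
        (hasSum_pow_mul_succ_mul_add hq₀ hq₁ _ 1)

/-- Uniform bound on `∑_{k=0}^{n} ∫_{B_k} log(∑_{j=k}^{n} c_{jk} |ξ_j|) dP`, where
`B_k = {|ξ_0| ≤ c, …, |ξ_{k-1}| ≤ c, |ξ_k| > c}` and `c_{jk} = C(j,k) R^{j-k}`:
the bound depends only on `q₁`, `c` and `R`, not on `n`. -/
theorem sum_log_integral_bounded
    (q₁ c R : ℝ) (hc : 0 < c) (hR0 : 0 < R) (hR1 : R < 1) (hq₁ : q₁ < 1) :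
    ∃ C'' : ℝ, ∀ (n : ℕ) (ν : Measure ℝ), IsProbabilityMeasure ν →
      Integrable (fun x => |x|) ν → (∫ x, |x| ∂ν) ≤ 1 →
      (ν {x : ℝ | |x| ≤ c}).toReal ≤ q₁ →
      ∀ (Ω : Type) (_ : MeasurableSpace Ω) (μ : Measure Ω), IsProbabilityMeasure μ →
      ∀ ξ : ℕ → Ω → ℝ, (∀ i, Measurable (ξ i)) →
        iIndepFun ξ μ →
        (∀ i, μ.map (ξ i) = ν) →
        (∑ k ∈ Finset.range (n + 1),
            ∫ ω in {ω | (∀ j < k, |ξ j ω| ≤ c) ∧ c < |ξ k ω|},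
              Real.log (∑ j ∈ Finset.Icc k n,
                (j.choose k : ℝ) * R ^ (j - k) * |ξ j ω|) ∂μ)
          ≤ C'' :=
  sum_log_integral_bounded_general q₁ c R hR0 hR1 hq₁
end
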